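/- arXiv:1709.00658 — 2 statements merged into one kernel-verified Lean document; each statement's English description precedes it below -/
import Mathlib

section
/- Let P be a chain complex of left R-modules and N a right R-module. Then the complex Hom_R(P, N⁺) of abelian groups is exact if and only if the complex N ⊗_R P is exact, where N⁺ = Hom_ℤ(N, ℚ/ℤ). -/
/-- Exactness of a pair of maps is equivalent to exactness of the dual pair on
character modules, since `ℚ/ℤ` is an injective cogenerator. -/
lemma charDual_exact_iff {R : Type*} [CommRing R] {A B C : Type*}
    [AddCommGroup A] [AddCommGroup B] [AddCommGroup C]
    [Module R A] [Module R B] [Module R C]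
    (f : A →ₗ[R] B) (g : B →ₗ[R] C) :
    Function.Exact (CharacterModule.dual g) (CharacterModule.dual f) ↔ Function.Exact f g := by
  constructor
  · intro h b
    constructor
    · intro hb
      by_contra hb'
      have hmk : (LinearMap.range f).mkQ b ≠ 0 := by
        intro h0
        exact hb' (by simpa [Submodule.Quotient.mk_eq_zero] using h0)
      obtain ⟨cbar, hcbar⟩ := CharacterModule.exists_character_apply_ne_zero_of_ne_zero hmk
      set c : CharacterModule B := CharacterModule.dual (LinearMap.range f).mkQ cbar with hc
      have hcf : CharacterModule.dual f c = 0 := by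
        ext a
        show cbar ((LinearMap.range f).mkQ (f a)) = 0
        have : (LinearMap.range f).mkQ (f a) = 0 := by
          simp [Submodule.Quotient.mk_eq_zero]
        rw [this, map_zero]
      obtain ⟨c', hc'⟩ := (h c).mp hcf
      have hcb : c b = 0 := by
        rw [← hc']
        show c' (g b) = 0
        rw [hb, map_zero]
      exact hcbar hcb
    · rintro ⟨a, rfl⟩
      apply CharacterModule.eq_zero_of_character_apply
      intro c
      have := DFunLike.congr_fun (h.apply_apply_eq_zero c) a
      exact this
  · intro h c
    constructor
    · intro hc
      let gz : B →ₗ[ℤ] C := g.restrictScalars ℤ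
      have hkerz : LinearMap.ker gz ≤ LinearMap.ker (c.toIntLinearMap) := by
        intro b hb
        have : g b = 0 := hb
        obtain ⟨a, rfl⟩ := (h b).mp this
        exact DFunLike.congr_fun hc a
      let l1 : (B ⧸ LinearMap.ker gz) →ₗ[ℤ] AddCircle (1 : ℚ) :=
        (LinearMap.ker gz).liftQ c.toIntLinearMap hkerz
      let l2 : LinearMap.range gz →ₗ[ℤ] AddCircle (1 : ℚ) :=
        l1 ∘ₗ gz.quotKerEquivRange.symm.toLinearMap
      obtain ⟨c', hc'⟩ := CharacterModule.dual_surjective_of_injective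
        (LinearMap.range gz).subtype (Submodule.injective_subtype _) l2.toAddMonoidHom
      refine ⟨c', ?_⟩
      ext b
      show c' (g b) = c b
      have hmem : g b ∈ LinearMap.range gz := ⟨b, rfl⟩
      have h1 : c' (g b) = l2 ⟨g b, hmem⟩ := by
        exact DFunLike.congr_fun hc' ⟨g b, hmem⟩
      have h2 : gz.quotKerEquivRange.symm ⟨g b, hmem⟩ =
          Submodule.Quotient.mk b :=
        gz.quotKerEquivRange_symm_apply_image b hmem
      have h3 : l2 ⟨g b, hmem⟩ = c b := by
        simp only [l2, LinearMap.comp_apply, LinearEquiv.coe_coe, h2]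
        simp [l1, Submodule.liftQ_apply]
        rfl
      rw [h1, h3]
    · rintro ⟨c', rfl⟩
      ext a
      show c' (g (f a)) = 0
      rw [h.apply_apply_eq_zero a, map_zero]


/- STATEMENT 2: Let `P` be a chain complex of left `R`-modules and `N` a right `R`-module.
The complex `Hom_R(P, N⁺)` of abelian groups is exact if and only if the complex `N ⊗_R P`
is exact, where `N⁺ = Hom_ℤ(N, ℚ/ℤ)` is the character module.
`Hom_R(P, N⁺)` is obtained by applying `Hom_R(-, N⁺)` degreewise (a cochain complex whose
differentials are precomposition with the differentials of `P`), and `N ⊗_R P` is obtained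
by applying `N ⊗_R -` degreewise. -/

theorem hom_into_character_exact_iff_tensor_exact
    (R : Type) [CommRing R] (N : Type) [AddCommGroup N] [Module R N]
    (P : ℤ → ModuleCat R) (d : ∀ n : ℤ, P (n + 1) →ₗ[R] P n)
    (hcomplex : ∀ n : ℤ, d n ∘ₗ d (n + 1) = 0) :
    (∀ n : ℤ, Function.Exact
        (fun g : P n →ₗ[R] CharacterModule N => g ∘ₗ d n)
        (fun g : P (n + 1) →ₗ[R] CharacterModule N => g ∘ₗ d (n + 1))) ↔
      (∀ n : ℤ, Function.Exact
        (LinearMap.lTensor N (d (n + 1))) (LinearMap.lTensor N (d n))) := by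
  have key : ∀ n : ℤ,
      (Function.Exact (fun g : P n →ₗ[R] CharacterModule N => g ∘ₗ d n)
        (fun g : P (n + 1) →ₗ[R] CharacterModule N => g ∘ₗ d (n + 1))) ↔
      Function.Exact (LinearMap.lTensor N (d (n + 1))) (LinearMap.lTensor N (d n)) := by
    intro n
    have t := charDual_exact_iff (R := R) (A := TensorProduct R N (P (n + 1 + 1) : ModuleCat R)) (B := TensorProduct R N (P (n + 1) : ModuleCat R)) (C := TensorProduct R N (P n : ModuleCat R)) (LinearMap.lTensor N (d (n + 1))) (LinearMap.lTensor N (d n))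
    let e : ∀ k : ℤ, (P k →ₗ[R] CharacterModule N) ≃ₗ[R]
        CharacterModule (TensorProduct R N (P k)) :=
      fun k => (CharacterModule.homEquiv (R := R) (A := P k) (B := N)) ≪≫ₗ
        CharacterModule.congr (TensorProduct.comm R (P k) N)
    have square : ∀ (k l : ℤ) (f : P l →ₗ[R] P k),
        (CharacterModule.dual (LinearMap.lTensor N f)) ∘ₗ (e k).toLinearMap
          = (e l).toLinearMap ∘ₗ f.lcomp R (CharacterModule N) := by
      intro k l f
      refine LinearMap.ext fun g => DFunLike.ext _ _ fun x => ?_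
      refine x.induction_on (by simp; exact AddMonoidHom.map_zero _) (fun n₀ a => ?_) (fun x y hx hy => ?_)
      · rfl
      · simp only [map_add] at hx hy ⊢
        rw [hx, hy]
    have lad := Function.Exact.iff_of_ladder_linearEquiv
      (e₁ := e n) (e₂ := e (n + 1)) (e₃ := e (n + 1 + 1))
      (square n (n + 1) (d n)) (square (n + 1) (n + 1 + 1) (d (n + 1)))
    exact lad.symm.trans t
  exact forall_congr' key
end

section
/- Every left R-module M embeds as a pure submodule into its double character module M⁺⁺ via the canonical evaluation map. -/
/- Every linear map `g : M → N⁺` into a character module factors through `M → M⁺⁺`: by naturality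
of the evaluation, `g` equals `M → M⁺⁺ → N⁺⁺⁺ → N⁺`, the last map being the dual of `N → N⁺⁺`,
which is a retraction of the evaluation of `N⁺`. So `Hom(ι, N⁺)` is surjective for
`ι : M → M⁺⁺`, which is equivalent to the injectivity of `ι ⊗ N` since
`Hom(-, N⁺) ≅ (- ⊗ N)⁺` and `ℚ/ℤ` is an injective cogenerator. -/

/-- The canonical evaluation map `M → M⁺⁺`. -/
def characterModuleEval (R : Type) [CommRing R] (M : Type) [AddCommGroup M] [Module R M] :
    M →ₗ[R] CharacterModule (CharacterModule M) where
  toFun m :=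
    { toFun := fun f => f m
      map_zero' := rfl
      map_add' := fun _ _ => rfl }
  map_add' m m' := by ext f; exact f.map_add m m'
  map_smul' r m := by ext f; rfl

section

open CharacterModule

variable {R : Type} [CommRing R] {A B : Type} [AddCommGroup A] [Module R A]
  [AddCommGroup B] [Module R B]

lemma characterModuleEval_injective : Function.Injective (characterModuleEval R A) :=
  (injective_iff_map_eq_zero _).2 fun _ h ↦ eq_zero_of_character_apply fun c ↦ congr($h c)

lemma characterModuleEval_comp (f : A →ₗ[R] B) :
    characterModuleEval R B ∘ₗ f = dual (dual f) ∘ₗ characterModuleEval R A :=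
  rfl

lemma dual_characterModuleEval_comp_characterModuleEval :
    dual (characterModuleEval R A) ∘ₗ characterModuleEval R (CharacterModule A) = .id :=
  rfl

lemma exists_comp_characterModuleEval_eq (g : A →ₗ[R] CharacterModule B) :
    ∃ h : CharacterModule (CharacterModule A) →ₗ[R] CharacterModule B,
      h ∘ₗ characterModuleEval R A = g := by
  refine ⟨dual (characterModuleEval R B) ∘ₗ dual (dual g), ?_⟩
  rw [LinearMap.comp_assoc, ← characterModuleEval_comp, ← LinearMap.comp_assoc,
    dual_characterModuleEval_comp_characterModuleEval, LinearMap.id_comp]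

end

theorem eval_into_double_character_is_pure_mono
    (R : Type) [CommRing R] (M : Type) [AddCommGroup M] [Module R M] :
    Function.Injective (characterModuleEval R M) ∧
      ∀ (N' : Type) (_ : AddCommGroup N') (_ : Module R N'),
        Function.Injective (LinearMap.lTensor N' (characterModuleEval R M)) := by
  refine ⟨characterModuleEval_injective, fun N' _ _ ↦ ?_⟩
  rw [LinearMap.lTensor_inj_iff_rTensor_inj, rTensor_injective_iff_lcomp_surjective]
  exact exists_comp_characterModuleEval_eq
end
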